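/- Let N ≥ 2 be an integer and let m be an integer with 0 ≤ m ≤ N. Then Σ_{α=1}^{N−1} η_α^m / |η_α − 1|² = (N²−1)/12 − m(N−1)/2 + m(m−1)/2, where |η_α − 1|² denotes the squared absolute value of η_α − 1. -/

import Mathlib

/-!
For an `N`-th root of unity `x ≠ 1` we have `|x - 1|² = -(x - 1)² / x`, and summation by parts
gives `(x - 1)² ∑_{j<N} j (N - 2 - j) xʲ = 2N`. Hence `x^m / |x - 1|²` is the polynomial
`-(2N)⁻¹ ∑_{j<N} j (N - 2 - j) x^(j+m+1)` evaluated at `x`. Summing over `x = ζ^α`, `1 ≤ α ≤ N - 1`,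
orthogonality `∑_α ζ^(kα) = N [N ∣ k] - 1` isolates the coefficient `j = N - 1 - m`, and what is left
is the closed form of `∑_j j (N - 2 - j)`. The case `m = N` reduces to `m = 0`.
-/

open Finset

/-- The roots of unity `η_α = exp(2πiα/N)`. -/
noncomputable def η (N α : ℕ) : ℂ :=
  Complex.exp (2 * Real.pi * Complex.I * α / N)

section SumsByParts

variable {R : Type*} [CommRing R] (x : R) (n : ℕ)

lemma sub_one_mul_sum_range_mul_pow :
    (x - 1) * ∑ j ∈ range n, (j : R) * x ^ j = (n - 1) * x ^ n - ∑ j ∈ range n, x ^ j + 1 := by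
  induction n with
  | zero => simp
  | succ n ih =>
    rw [sum_range_succ, sum_range_succ]
    push_cast
    linear_combination ih

lemma sub_one_mul_sum_range_sq_mul_pow :
    (x - 1) * ∑ j ∈ range n, (j : R) ^ 2 * x ^ j
      = (n - 1) ^ 2 * x ^ n - 2 * ∑ j ∈ range n, (j : R) * x ^ j + ∑ j ∈ range n, x ^ j - 1 := by
  induction n with
  | zero => simp
  | succ n ih =>
    simp only [sum_range_succ]
    push_cast
    linear_combination ih

end SumsByParts

lemma geom_sum_eq_zero_of_pow_eq_one {R : Type*} [CommRing R] [IsDomain R] {x : R} {n : ℕ}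
    (hx : x ^ n = 1) (hx1 : x ≠ 1) : ∑ j ∈ range n, x ^ j = 0 := by
  have h := geom_sum_mul x n
  rw [hx, sub_self] at h
  exact (mul_eq_zero.mp h).resolve_right (sub_ne_zero.mpr hx1)

def invSqSubOneCoeff (R : Type*) [CommRing R] (N j : ℕ) : R := ((N : R) - 2 - j) * j

lemma sq_sub_one_mul_sum_invSqSubOneCoeff {R : Type*} [CommRing R] [IsDomain R] {x : R} {N : ℕ}
    (hx : x ^ N = 1) (hx1 : x ≠ 1) :
    (x - 1) ^ 2 * ∑ j ∈ range N, invSqSubOneCoeff R N j * x ^ j = 2 * N := by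
  have hG := geom_sum_eq_zero_of_pow_eq_one hx hx1
  have h1 := sub_one_mul_sum_range_mul_pow x N
  have h2 := sub_one_mul_sum_range_sq_mul_pow x N
  rw [hx, hG] at h1 h2
  have hsplit : ∑ j ∈ range N, invSqSubOneCoeff R N j * x ^ j
      = ((N : R) - 2) * ∑ j ∈ range N, (j : R) * x ^ j - ∑ j ∈ range N, (j : R) ^ 2 * x ^ j := by
    simp only [invSqSubOneCoeff, mul_sum, ← sum_sub_distrib]
    exact sum_congr rfl fun j _ => by ring
  rw [hsplit]
  linear_combination (((N : R) - 2) * (x - 1) + 2) * h1 - (x - 1) * h2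

lemma sum_range_invSqSubOneCoeff {R : Type*} [CommRing R] (N n : ℕ) :
    6 * ∑ j ∈ range n, invSqSubOneCoeff R N j = n * (n - 1) * (3 * N - 2 * n - 5) := by
  induction n with
  | zero => simp
  | succ n ih =>
    rw [sum_range_succ, mul_add, ih, invSqSubOneCoeff]
    push_cast
    ring

lemma Complex.ofReal_norm_sub_one_sq {z : ℂ} (hz : ‖z‖ = 1) :
    ((‖z - 1‖ : ℝ) : ℂ) ^ 2 = -(z - 1) ^ 2 / z := by
  have hz0 : z ≠ 0 := norm_ne_zero_iff.mp (by rw [hz]; exact one_ne_zero)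
  rw [← Complex.mul_conj', map_sub, map_one, ← RCLike.inv_eq_conj hz]
  field_simp
  ring

lemma IsPrimitiveRoot.sum_Icc_pow_pow {R : Type*} [CommRing R] [IsDomain R] {ζ : R} {N : ℕ}
    (hζ : IsPrimitiveRoot ζ N) (hN : 0 < N) (k : ℕ) :
    ∑ α ∈ Icc 1 (N - 1), (ζ ^ k) ^ α = (if N ∣ k then (N : R) else 0) - 1 := by
  have hrange : ∑ α ∈ range N, (ζ ^ k) ^ α = if N ∣ k then (N : R) else 0 := by
    split_ifs with hk
    · simp [(hζ.pow_eq_one_iff_dvd k).mpr hk]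
    · refine geom_sum_eq_zero_of_pow_eq_one ?_ (mt (hζ.pow_eq_one_iff_dvd k).mp hk)
      rw [pow_right_comm, hζ.pow_eq_one, one_pow]
  rw [← hrange, sum_range_eq_add_Ico _ hN, pow_zero]
  exact (add_sub_cancel_left _ _).symm

lemma pow_div_ofReal_norm_sub_one_sq {x : ℂ} {N : ℕ} (hN : N ≠ 0) (hx : x ^ N = 1) (hx1 : x ≠ 1)
    (m : ℕ) :
    x ^ m / ((‖x - 1‖ : ℝ) : ℂ) ^ 2
      = -(2 * N : ℂ)⁻¹ * ∑ j ∈ range N, invSqSubOneCoeff ℂ N j * x ^ (j + m + 1) := by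
  have hkey := sq_sub_one_mul_sum_invSqSubOneCoeff hx hx1
  have hshift : ∑ j ∈ range N, invSqSubOneCoeff ℂ N j * x ^ (j + m + 1)
      = (∑ j ∈ range N, invSqSubOneCoeff ℂ N j * x ^ j) * x ^ (m + 1) := by
    rw [sum_mul]
    exact sum_congr rfl fun j _ => by ring
  rw [Complex.ofReal_norm_sub_one_sq (Complex.norm_eq_one_of_pow_eq_one hx hN), hshift]
  field_simp
  linear_combination x ^ (m + 1) * hkey

lemma Nat.dvd_add_add_one_iff {N j m : ℕ} (hj : j < N) (hm : m < N) :
    N ∣ j + m + 1 ↔ j = N - 1 - m := by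
  constructor
  · rintro ⟨k, hk⟩
    rcases k with _ | _ | k
    · omega
    · omega
    · nlinarith
  · rintro rfl
    exact ⟨1, by omega⟩

lemma IsPrimitiveRoot.sum_pow_div_ofReal_norm_sub_one_sq {ζ : ℂ} {N : ℕ} (hζ : IsPrimitiveRoot ζ N)
    {m : ℕ} (hm : m < N) :
    ∑ α ∈ Icc 1 (N - 1), (ζ ^ α) ^ m / ((‖ζ ^ α - 1‖ : ℝ) : ℂ) ^ 2
      = ((N : ℂ) ^ 2 - 1) / 12 - (m : ℂ) * ((N : ℂ) - 1) / 2 + (m : ℂ) * ((m : ℂ) - 1) / 2 := by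
  have hN : 0 < N := by omega
  have hterm : ∀ α ∈ Icc 1 (N - 1), (ζ ^ α) ^ m / ((‖ζ ^ α - 1‖ : ℝ) : ℂ) ^ 2
      = -(2 * N : ℂ)⁻¹ * ∑ j ∈ range N, invSqSubOneCoeff ℂ N j * (ζ ^ (j + m + 1)) ^ α := by
    intro α hα
    rw [mem_Icc] at hα
    rw [pow_div_ofReal_norm_sub_one_sq hN.ne' (by rw [pow_right_comm, hζ.pow_eq_one, one_pow])
      (hζ.pow_ne_one_of_pos_of_lt (by omega) (by omega)) m]
    simp_rw [pow_right_comm ζ α]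
  have hsum := sum_range_invSqSubOneCoeff (R := ℂ) N N
  have hcast : ((N - 1 - m : ℕ) : ℂ) = N - 1 - m := by
    rw [Nat.sub_sub, Nat.cast_sub (by omega)]
    push_cast
    ring
  calc ∑ α ∈ Icc 1 (N - 1), (ζ ^ α) ^ m / ((‖ζ ^ α - 1‖ : ℝ) : ℂ) ^ 2
      = -(2 * N : ℂ)⁻¹ * ∑ j ∈ range N,
          invSqSubOneCoeff ℂ N j * ((if j = N - 1 - m then (N : ℂ) else 0) - 1) := by
        rw [sum_congr rfl hterm, ← mul_sum, sum_comm]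
        congr 1
        refine sum_congr rfl fun j hj => ?_
        rw [← mul_sum, hζ.sum_Icc_pow_pow hN,
          if_congr (Nat.dvd_add_add_one_iff (mem_range.mp hj) hm) rfl rfl]
    _ = -(2 * N : ℂ)⁻¹
          * (N * invSqSubOneCoeff ℂ N (N - 1 - m) - ∑ j ∈ range N, invSqSubOneCoeff ℂ N j) := by
        have hj : N - 1 - m < N := by omega
        simp [mul_sub, sum_sub_distrib, mul_ite, mul_comm, hj]
    _ = _ := by
        rw [invSqSubOneCoeff, hcast]
        have hN0 : (N : ℂ) ≠ 0 := Nat.cast_ne_zero.mpr hN.ne'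
        field_simp
        linear_combination 2 * hsum

lemma η_eq_pow (N α : ℕ) : η N α = Complex.exp (2 * Real.pi * Complex.I / N) ^ α := by
  rw [η, ← Complex.exp_nat_mul]
  ring_nf

theorem stmt13 (N : ℕ) (hN : 2 ≤ N) (m : ℕ) (hm : m ≤ N) :
    ∑ α ∈ Finset.Icc 1 (N - 1), η N α ^ m / (((‖η N α - 1‖ : ℝ) : ℂ)) ^ 2
    = ((N : ℂ) ^ 2 - 1) / 12 - (m : ℂ) * ((N : ℂ) - 1) / 2 + (m : ℂ) * ((m : ℂ) - 1) / 2 := by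
  obtain ⟨ζ, hζ, hη⟩ : ∃ ζ : ℂ, IsPrimitiveRoot ζ N ∧ ∀ α, η N α = ζ ^ α :=
    ⟨_, Complex.isPrimitiveRoot_exp N (by omega), η_eq_pow N⟩
  simp_rw [hη]
  rcases hm.lt_or_eq with hm | hm
  · exact hζ.sum_pow_div_ofReal_norm_sub_one_sq hm
  · have hpow (α : ℕ) : (ζ ^ α) ^ m = (ζ ^ α) ^ 0 := by
      rw [hm, pow_right_comm, hζ.pow_eq_one, one_pow, pow_zero]
    simp_rw [hpow, hζ.sum_pow_div_ofReal_norm_sub_one_sq (by omega : 0 < N), hm]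
    push_cast
    ring
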